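/- Let A ∈ M_m(M_n) be positive semidefinite. Then (tr A)·I_{mn} − (tr₂A) ⊗ I_n ≥ A − I_m ⊗ (tr₁A) in the Löwner order. -/

import Mathlib

/-!
The map `Φ A = (tr A • 1 - tr₂ A ⊗ 1) - (A - 1 ⊗ tr₁ A)` is additive, so it suffices to treat
`A = b b*`. There `Φ A = (tr (tr₂ A) • 1 - tr₂ A) ⊗ 1 + 1 ⊗ tr₁ A - b b*`, and the first two
summands are positive semidefinite: partial traces preserve positivity, and so does the
reduction map `P ↦ tr P • 1 - P` (Cauchy–Schwarz on rank-one `P`). Moreover `Φ (b b*) b = 0`,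
since `(tr₂ A ⊗ 1) b` and `(1 ⊗ tr₁ A) b` both encode `B B* B` for the `m × n` matrix `B` of
entries of `b`. So the quadratic form of `Φ (b b*)` does not change when `x` is replaced by its
component orthogonal to `b`, and there the term `-b b*` vanishes.
-/

open Matrix BigOperators Kronecker ComplexOrder

/-- First partial trace: sum of the diagonal blocks. -/
noncomputable def ptrace1 {n k : ℕ} (H : Matrix (Fin n × Fin k) (Fin n × Fin k) ℂ) :
    Matrix (Fin k) (Fin k) ℂ :=
  Matrix.of fun l m => ∑ i : Fin n, H (i, l) (i, m)

/-- Second partial trace: matrix of traces of the blocks. -/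
noncomputable def ptrace2 {n k : ℕ} (H : Matrix (Fin n × Fin k) (Fin n × Fin k) ℂ) :
    Matrix (Fin n) (Fin n) ℂ :=
  Matrix.of fun i j => ∑ l : Fin k, H (i, l) (j, l)

namespace Matrix

variable {𝕜 : Type*} [RCLike 𝕜] {ι : Type*} [Fintype ι]

theorem norm_dotProduct_sq_le (v x : ι → 𝕜) :
    ‖star v ⬝ᵥ x‖ ^ 2 ≤ RCLike.re (star v ⬝ᵥ v) * RCLike.re (star x ⬝ᵥ x) := by
  have h := inner_mul_inner_self_le (𝕜 := 𝕜) (WithLp.toLp 2 v) (WithLp.toLp 2 x)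
  simp only [EuclideanSpace.inner_toLp_toLp, dotProduct_comm _ (star _)] at h
  rwa [star_dotProduct x v, norm_star, ← sq] at h

theorem PosSemidef.map_of_vecMulVec {κ : Type*} (f : Matrix ι ι 𝕜 →+ Matrix κ κ 𝕜)
    (hf : ∀ v : ι → 𝕜, (f (vecMulVec v (star v))).PosSemidef)
    {A : Matrix ι ι 𝕜} (hA : A.PosSemidef) : (f A).PosSemidef := by
  obtain ⟨r, v, rfl⟩ := posSemidef_iff_eq_sum_vecMulVec.mp hA
  rw [map_sum]
  exact posSemidef_sum _ fun i _ => hf (v i)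

theorem IsHermitian.dotProduct_mulVec_add_smul {M : Matrix ι ι 𝕜} (hM : M.IsHermitian)
    {v : ι → 𝕜} (hv : M *ᵥ v = 0) (x : ι → 𝕜) (c : 𝕜) :
    star (x + c • v) ⬝ᵥ M *ᵥ (x + c • v) = star x ⬝ᵥ M *ᵥ x := by
  have hvM : star v ⬝ᵥ M *ᵥ x = 0 := by
    rw [dotProduct_mulVec, ← hM.eq, ← star_mulVec, hv, star_zero, zero_dotProduct]
  rw [mulVec_add, mulVec_smul, hv, smul_zero, add_zero, star_add, add_dotProduct, star_smul,
    smul_dotProduct, hvM, smul_zero, add_zero]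

section Kronecker

variable {R : Type*} [CommSemiring R] {κ : Type*} [Fintype κ]

theorem kronecker_one_mulVec_apply [DecidableEq κ] (M : Matrix ι ι R)
    (x : ι × κ → R) (i : ι) (l : κ) :
    ((M ⊗ₖ (1 : Matrix κ κ R)) *ᵥ x) (i, l) = ∑ j, M i j * x (j, l) := by
  simp [mulVec, dotProduct, Fintype.sum_prod_type, one_apply]

theorem one_kronecker_mulVec_apply [DecidableEq ι] (M : Matrix κ κ R)
    (x : ι × κ → R) (i : ι) (l : κ) :
    (((1 : Matrix ι ι R) ⊗ₖ M) *ᵥ x) (i, l) = ∑ q, M l q * x (i, q) := by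
  simp [mulVec, dotProduct, Fintype.sum_prod_type, one_apply]

end Kronecker

variable [DecidableEq ι]

theorem posSemidef_trace_smul_one_sub_vecMulVec (v : ι → 𝕜) :
    ((vecMulVec v (star v)).trace • (1 : Matrix ι ι 𝕜) - vecMulVec v (star v)).PosSemidef := by
  have hvv := posSemidef_vecMulVec_self_star v
  refine .of_dotProduct_mulVec_nonneg ((PosSemidef.one.smul hvv.trace_nonneg).1.sub hvv.1)
    fun x => ?_
  obtain ⟨-, hv⟩ := RCLike.nonneg_iff.mp (dotProduct_star_self_nonneg v)
  obtain ⟨-, hx⟩ := RCLike.nonneg_iff.mp (dotProduct_star_self_nonneg x)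
  rw [sub_mulVec, smul_mulVec, one_mulVec, vecMulVec_mulVec, dotProduct_sub, dotProduct_smul,
    dotProduct_smul, trace_vecMulVec, dotProduct_comm v, star_dotProduct x v, RCLike.nonneg_iff]
  simpa [RCLike.mul_re, RCLike.mul_im, hv, hx, RCLike.conj_mul] using norm_dotProduct_sq_le v x

theorem PosSemidef.trace_smul_one_sub {A : Matrix ι ι 𝕜} (hA : A.PosSemidef) :
    (A.trace • (1 : Matrix ι ι 𝕜) - A).PosSemidef :=
  hA.map_of_vecMulVec (AddMonoidHom.mk' (fun A => A.trace • 1 - A) fun A B => by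
    rw [trace_add, add_smul]; abel) posSemidef_trace_smul_one_sub_vecMulVec

end Matrix

section PartialTrace

variable {m n : ℕ} (A B : Matrix (Fin m × Fin n) (Fin m × Fin n) ℂ)

theorem ptrace1_eq_sum_submatrix : ptrace1 A = ∑ i, A.submatrix (Prod.mk i) (Prod.mk i) := by
  ext l q
  simp [ptrace1, Matrix.sum_apply]

theorem ptrace2_eq_sum_submatrix :
    ptrace2 A = ∑ l, A.submatrix (fun i => (i, l)) (fun i => (i, l)) := by
  ext i j
  simp [ptrace2, Matrix.sum_apply]

theorem ptrace1_add : ptrace1 (A + B) = ptrace1 A + ptrace1 B := by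
  ext l q
  simp [ptrace1, Finset.sum_add_distrib]

theorem ptrace2_add : ptrace2 (A + B) = ptrace2 A + ptrace2 B := by
  ext i j
  simp [ptrace2, Finset.sum_add_distrib]

theorem trace_ptrace2 : (ptrace2 A).trace = A.trace := by
  simp [ptrace2, Matrix.trace, Fintype.sum_prod_type]

variable {A}

theorem Matrix.PosSemidef.ptrace1 (hA : A.PosSemidef) : (ptrace1 A).PosSemidef := by
  rw [ptrace1_eq_sum_submatrix]
  exact posSemidef_sum _ fun i _ => hA.submatrix _

theorem Matrix.PosSemidef.ptrace2 (hA : A.PosSemidef) : (ptrace2 A).PosSemidef := by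
  rw [ptrace2_eq_sum_submatrix]
  exact posSemidef_sum _ fun l _ => hA.submatrix _

end PartialTrace

noncomputable def liLiuHuangMap (m n : ℕ) :
    Matrix (Fin m × Fin n) (Fin m × Fin n) ℂ →+ Matrix (Fin m × Fin n) (Fin m × Fin n) ℂ :=
  AddMonoidHom.mk' (fun A => (A.trace • 1 - ptrace2 A ⊗ₖ 1) - (A - 1 ⊗ₖ ptrace1 A)) fun A B => by
    simp only [trace_add, add_smul, ptrace1_add, ptrace2_add, add_kronecker, kronecker_add]
    abel

section LiLiuHuang

variable {m n : ℕ}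

theorem liLiuHuangMap_apply (A : Matrix (Fin m × Fin n) (Fin m × Fin n) ℂ) :
    liLiuHuangMap m n A = (A.trace • 1 - ptrace2 A ⊗ₖ 1) - (A - 1 ⊗ₖ ptrace1 A) :=
  rfl

theorem liLiuHuangMap_apply_eq_reduction_add
    (A : Matrix (Fin m × Fin n) (Fin m × Fin n) ℂ) :
    liLiuHuangMap m n A = ((ptrace2 A).trace • 1 - ptrace2 A) ⊗ₖ 1 + 1 ⊗ₖ ptrace1 A - A := by
  have hR : ((ptrace2 A).trace • 1 - ptrace2 A) ⊗ₖ (1 : Matrix (Fin n) (Fin n) ℂ) =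
      A.trace • 1 - ptrace2 A ⊗ₖ 1 := by
    rw [eq_sub_iff_add_eq, ← add_kronecker, sub_add_cancel, smul_kronecker, one_kronecker_one,
      trace_ptrace2]
  rw [liLiuHuangMap_apply, hR]
  abel

theorem liLiuHuangMap_vecMulVec_mulVec_self (b : Fin m × Fin n → ℂ) :
    liLiuHuangMap m n (vecMulVec b (star b)) *ᵥ b = 0 := by
  have hswap : (ptrace2 (vecMulVec b (star b)) ⊗ₖ 1) *ᵥ b =
      (1 ⊗ₖ ptrace1 (vecMulVec b (star b))) *ᵥ b := by
    ext ⟨i, l⟩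
    simp only [kronecker_one_mulVec_apply, one_kronecker_mulVec_apply, ptrace1, ptrace2, of_apply,
      vecMulVec_apply, Finset.sum_mul]
    rw [Finset.sum_comm]
    exact Finset.sum_congr rfl fun _ _ => Finset.sum_congr rfl fun _ _ => by ring
  rw [liLiuHuangMap_apply, sub_mulVec, sub_mulVec, sub_mulVec, hswap, smul_mulVec, one_mulVec,
    vecMulVec_mulVec, trace_vecMulVec, dotProduct_comm, op_smul_eq_smul]
  abel

theorem posSemidef_liLiuHuangMap_vecMulVec (b : Fin m × Fin n → ℂ) :
    (liLiuHuangMap m n (vecMulVec b (star b))).PosSemidef := by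
  have hker := liLiuHuangMap_vecMulVec_mulVec_self b
  have hA := posSemidef_vecMulVec_self_star b
  set A := vecMulVec b (star b)
  have hsum : (((ptrace2 A).trace • 1 - ptrace2 A) ⊗ₖ 1 + 1 ⊗ₖ ptrace1 A).PosSemidef :=
    (hA.ptrace2.trace_smul_one_sub.kronecker .one).add (PosSemidef.one.kronecker hA.ptrace1)
  have hM : (liLiuHuangMap m n A).IsHermitian := by
    rw [liLiuHuangMap_apply_eq_reduction_add]
    exact hsum.1.sub hA.1
  refine .of_dotProduct_mulVec_nonneg hM fun x => ?_
  obtain ⟨y, hy, hxy⟩ : ∃ y, star b ⬝ᵥ y = 0 ∧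
      star x ⬝ᵥ liLiuHuangMap m n A *ᵥ x = star y ⬝ᵥ liLiuHuangMap m n A *ᵥ y := by
    by_cases hb : b = 0
    · exact ⟨x, by simp [hb], rfl⟩
    have hbb : star b ⬝ᵥ b ≠ 0 := dotProduct_star_self_eq_zero.not.mpr hb
    refine ⟨x + (-(star b ⬝ᵥ x) / (star b ⬝ᵥ b)) • b, ?_,
      (hM.dotProduct_mulVec_add_smul hker x _).symm⟩
    rw [dotProduct_add, dotProduct_smul, smul_eq_mul]
    field_simp
    ring
  rw [hxy, liLiuHuangMap_apply_eq_reduction_add, sub_mulVec, dotProduct_sub, vecMulVec_mulVec,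
    dotProduct_smul, hy]
  simpa using hsum.dotProduct_mulVec_nonneg y

end LiLiuHuang

/-- Li–Liu–Huang: (tr A)·I_{mn} − (tr₂A) ⊗ I_n ≥ A − I_m ⊗ tr₁A. -/
theorem stmt12 {m n : ℕ}
    (A : Matrix (Fin m × Fin n) (Fin m × Fin n) ℂ) (hA : A.PosSemidef) :
    ((A.trace • (1 : Matrix (Fin m × Fin n) (Fin m × Fin n) ℂ) -
        ptrace2 A ⊗ₖ (1 : Matrix (Fin n) (Fin n) ℂ)) -
      (A - (1 : Matrix (Fin m) (Fin m) ℂ) ⊗ₖ ptrace1 A)).PosSemidef :=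
  hA.map_of_vecMulVec (liLiuHuangMap m n) posSemidef_liLiuHuangMap_vecMulVec
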